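/- Under the R3 switch applied to a matched triple configuration, each of the three chords retains the same sign, the same direction, and the same parity as before the switch; consequently each chord has the same 3-sign, and if the original triple had all 3-signs equal then so does the resulting triple. -/
import Mathlib


/-- The six points `0,…,5`, placed counterclockwise on the circle. -/
abbrev Pt := Fin 6

/-- The arc containing a point: the arcs are `A₀ = {0,1}`, `A₁ = {2,3}`, `A₂ = {4,5}`. -/
def arcOf (x : Pt) : Fin 3 := ⟨x.val / 2, by omega⟩

/-- The first point `2k` of arc `Aₖ`. -/
def p0 (k : Fin 3) : Pt := ⟨2 * k.val, by omega⟩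

/-- The second point `2k+1` of arc `Aₖ`. -/
def p1 (k : Fin 3) : Pt := ⟨2 * k.val + 1, by omega⟩

/-- `m` is a perfect matching of the six points into three chords:
a fixed-point-free involution; `m x` is the other endpoint of the chord at `x`. -/
def IsMatching (m : Pt → Pt) : Prop := (∀ x, m (m x) = x) ∧ (∀ x, m x ≠ x)

/-- Each chord is directed: `h x = true` iff `x` is the head of its chord,
so the two endpoints of any chord consist of one head and one tail. -/
def HeadTail (m : Pt → Pt) (h : Pt → Bool) : Prop := ∀ x, h (m x) = ! h x

/-- The sign `ε ∈ {+1, -1}` (an element of `ℤˣ`) is attached to chords: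
both endpoints of a chord carry the same sign. -/
def SignOnChords (m : Pt → Pt) (s : Pt → ℤˣ) : Prop := ∀ x, s (m x) = s x


instance (m : Pt → Pt) : Decidable (IsMatching m) := by
  unfold IsMatching; infer_instance

instance (m : Pt → Pt) (h : Pt → Bool) : Decidable (HeadTail m h) := by
  unfold HeadTail; infer_instance

instance (m : Pt → Pt) (s : Pt → ℤˣ) : Decidable (SignOnChords m s) := by
  unfold SignOnChords; infer_instance

/-- The chords `{a,b}` and `{c,d}` cross: their endpoint pairs interleave in the
cyclic order `0,1,2,3,4,5`, i.e. exactly one of `c, d` lies strictly between `a` and `b`. -/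
def Crosses (a b c d : Pt) : Prop :=
  ((min a b < c ∧ c < max a b) ∧ ¬(min a b < d ∧ d < max a b)) ∨
    ((min a b < d ∧ d < max a b) ∧ ¬(min a b < c ∧ c < max a b))


instance (a b c d : Pt) : Decidable (Crosses a b c d) := by
  unfold Crosses; infer_instance

/-- The parity of the chord through `x` in the triple: `+1` if it crosses an even
number of the other two chords, `-1` if odd.  The other chords are enumerated by
their representatives `y` with `y < m y`. -/
def parity (m : Pt → Pt) (x : Pt) : ℤˣ :=
  if (Finset.univ.filter
      (fun y : Pt => y < m y ∧ y ≠ x ∧ y ≠ m x ∧ Crosses x (m x) y (m y))).card % 2 = 0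
  then 1 else -1

/-- The head endpoint of the chord through `x`. -/
def headPt (m : Pt → Pt) (h : Pt → Bool) (x : Pt) : Pt := if h x then x else m x

/-- The tail endpoint of the chord through `x`. -/
def tailPt (m : Pt → Pt) (h : Pt → Bool) (x : Pt) : Pt := if h x then m x else x

/-- The direction of the chord through `x`: `+1` (counterclockwise) if, with tail in
arc `Aᵢ` and head in arc `Aⱼ`, we have `j ≡ i + 1 (mod 3)`; `-1` (clockwise) otherwise
(for chords of a matched triple this is exactly the case `j ≡ i - 1 (mod 3)`). -/
def direction (m : Pt → Pt) (h : Pt → Bool) (x : Pt) : ℤˣ :=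
  if arcOf (headPt m h x) = arcOf (tailPt m h x) + 1 then 1 else -1

/-- The 3-sign of the chord through `x`: the product of its sign, parity and direction. -/
def threeSign (m : Pt → Pt) (h : Pt → Bool) (s : Pt → ℤˣ) (x : Pt) : ℤˣ :=
  s x * parity m x * direction m h x

/-- The triple is matched: one arc contains two heads, one arc contains two tails,
and the remaining arc contains one head and one tail belonging to two distinct chords. -/
def Matched (m : Pt → Pt) (h : Pt → Bool) : Prop :=
  ∃ a b c : Fin 3, a ≠ b ∧ a ≠ c ∧ b ≠ c ∧
    h (p0 a) = true ∧ h (p1 a) = true ∧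
    h (p0 b) = false ∧ h (p1 b) = false ∧
    h (p0 c) ≠ h (p1 c) ∧ m (p0 c) ≠ p1 c

instance (m : Pt → Pt) (h : Pt → Bool) : Decidable (Matched m h) := by
  unfold Matched; infer_instance

/-- Swap the two points of each arc `Aₖ = {2k, 2k+1}`. -/
def ptFlip (x : Pt) : Pt := if x.val % 2 = 0 then x + 1 else x - 1

/-- The matching after the R3 switch: endpoints are swapped within each arc. -/
def switchM (m : Pt → Pt) : Pt → Pt := fun x => ptFlip (m (ptFlip x))

/-- The head designations after the R3 switch: each endpoint keeps its
head/tail designation as it moves within its arc. -/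
def switchH (h : Pt → Bool) : Pt → Bool := fun x => h (ptFlip x)

/-- The signs after the R3 switch: each chord keeps its sign. -/
def switchS (s : Pt → ℤˣ) : Pt → ℤˣ := fun x => s (ptFlip x)

lemma ptFlip_ptFlip : ∀ x : Pt, ptFlip (ptFlip x) = x := by decide

lemma switchH_ptFlip (h : Pt → Bool) (x : Pt) : switchH h (ptFlip x) = h x := by
  simp [switchH, ptFlip_ptFlip]

lemma switchM_ptFlip (m : Pt → Pt) (x : Pt) : switchM m (ptFlip x) = ptFlip (m x) := by
  simp [switchM, ptFlip_ptFlip]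

lemma arcOf_ptFlip : ∀ x : Pt, arcOf (ptFlip x) = arcOf x := by decide

lemma direction_switch (m : Pt → Pt) (h : Pt → Bool) (x : Pt) :
    direction (switchM m) (switchH h) (ptFlip x) = direction m h x := by
  unfold direction headPt tailPt
  rw [switchH_ptFlip, switchM_ptFlip]
  by_cases hx : h x <;> simp [hx, arcOf_ptFlip]

lemma cover3 : ∀ a b c k : Fin 3, a ≠ b → a ≠ c → b ≠ c → k = a ∨ k = b ∨ k = c := by
  decide

lemma no_intra_arc (m : Pt → Pt) (h : Pt → Bool) (hm : IsMatching m)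
    (hh : HeadTail m h) (hmat : Matched m h) : ∀ x : Pt, m x ≠ ptFlip x := by
  obtain ⟨a, b, c, hab, hac, hbc, ha0, ha1, hb0, hb1, hc, hcm⟩ := hmat
  have hp0 : ∀ k : Fin 3, m (p0 k) ≠ p1 k := by
    intro k
    rcases cover3 a b c k hab hac hbc with rfl | rfl | rfl
    · intro he
      have := hh (p0 k); rw [he, ha0, ha1] at this; simp at this
    · intro he
      have := hh (p0 k); rw [he, hb0, hb1] at this; simp at this
    · exact hcm
  intro x
  have hx : x = p0 (arcOf x) ∨ x = p1 (arcOf x) := by revert x; decide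
  have hf0 : ∀ k : Fin 3, ptFlip (p0 k) = p1 k := by decide
  have hf1 : ∀ k : Fin 3, ptFlip (p1 k) = p0 k := by decide
  rcases hx with he | he
  · rw [he, hf0]; exact hp0 _
  · rw [he, hf1]
    intro hcon
    have := hm.1 (p1 (arcOf x))
    rw [hcon] at this
    exact hp0 _ this

/-- Reconstruct a matching from its values on `{0,1,2,3}` (valid when no chord
stays within an arc, so that `4` and `5` are not matched to each other). -/
def mOf (a b c d : Pt) : Pt → Pt := fun x =>
  if x = 0 then a else if x = 1 then b else if x = 2 then c
  else if x = 3 then d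
  else if a = x then 0 else if b = x then 1 else if c = x then 2 else 3

set_option maxHeartbeats 4000000 in
set_option maxRecDepth 10000 in
lemma keyP4 : ∀ a b c d : Pt, IsMatching (mOf a b c d) →
    (∀ x, mOf a b c d x ≠ ptFlip x) →
    ∀ x, parity (switchM (mOf a b c d)) (ptFlip x) = parity (mOf a b c d) x := by
  decide

lemma m_eq_mOf (m : Pt → Pt) (hm : IsMatching m) (hd : ∀ x, m x ≠ ptFlip x) :
    m = mOf (m 0) (m 1) (m 2) (m 3) := by
  have inv := hm.1
  have iff4 : ∀ i z : Pt, m i = z ↔ m z = i := fun i z =>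
    ⟨fun e => by rw [← e, inv], fun e => by rw [← e, inv]⟩
  have h6 : ∀ z : Pt, z = 0 ∨ z = 1 ∨ z = 2 ∨ z = 3 ∨ z = 4 ∨ z = 5 := by decide
  funext x
  rcases h6 x with rfl | rfl | rfl | rfl | rfl | rfl
  · simp [mOf]
  · simp [mOf]
  · simp [mOf]
  · simp [mOf]
  · rcases h6 (m 4) with hv | hv | hv | hv | hv | hv <;>
      first
        | exact absurd hv (hm.2 4)
        | exact absurd hv (hd 4)
        | simp [mOf, iff4 0 4, iff4 1 4, iff4 2 4, iff4 3 4, hv]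
  · rcases h6 (m 5) with hv | hv | hv | hv | hv | hv <;>
      first
        | exact absurd hv (hm.2 5)
        | exact absurd hv (hd 5)
        | simp [mOf, iff4 0 5, iff4 1 5, iff4 2 5, iff4 3 5, hv]

lemma parity_switch (m : Pt → Pt) (hm : IsMatching m) (hd : ∀ x, m x ≠ ptFlip x) :
    ∀ x, parity (switchM m) (ptFlip x) = parity m x := by
  have he := m_eq_mOf m hm hd
  rw [he] at hm hd ⊢
  exact keyP4 (m 0) (m 1) (m 2) (m 3) hm hd
/-- Under the R3 switch applied to a matched triple configuration, each
of the three chords retains the same sign, the same direction, and the same parity as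
before the switch (the chord through `x` becomes the chord through `ptFlip x`);
consequently each chord has the same 3-sign, and if the original triple had all 3-signs
equal then so does the resulting triple. -/
theorem r3Switch_preserves_sign_direction_parity (m : Pt → Pt) (h : Pt → Bool)
    (s : Pt → ℤˣ) (hm : IsMatching m) (hh : HeadTail m h) (hs : SignOnChords m s)
    (hmat : Matched m h) :
    (∀ x : Pt, switchS s (ptFlip x) = s x) ∧
    (∀ x : Pt, direction (switchM m) (switchH h) (ptFlip x) = direction m h x) ∧
    (∀ x : Pt, parity (switchM m) (ptFlip x) = parity m x) ∧
    (∀ x : Pt, threeSign (switchM m) (switchH h) (switchS s) (ptFlip x)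
      = threeSign m h s x) ∧
    ((∀ x y : Pt, threeSign m h s x = threeSign m h s y) →
      ∀ x y : Pt, threeSign (switchM m) (switchH h) (switchS s) x
        = threeSign (switchM m) (switchH h) (switchS s) y) := by
  have hd := no_intra_arc m h hm hh hmat
  have hsS : ∀ x : Pt, switchS s (ptFlip x) = s x := by
    intro x; simp [switchS, ptFlip_ptFlip]
  have hdir : ∀ x : Pt, direction (switchM m) (switchH h) (ptFlip x) = direction m h x :=
    fun x => direction_switch m h x
  have hpar : ∀ x : Pt, parity (switchM m) (ptFlip x) = parity m x :=
    parity_switch m hm hd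
  have hts : ∀ x : Pt, threeSign (switchM m) (switchH h) (switchS s) (ptFlip x)
      = threeSign m h s x := by
    intro x
    unfold threeSign
    rw [hsS, hdir, hpar]
  refine ⟨hsS, hdir, hpar, hts, ?_⟩
  intro hall x y
  calc threeSign (switchM m) (switchH h) (switchS s) x
      = threeSign (switchM m) (switchH h) (switchS s) (ptFlip (ptFlip x)) := by
        rw [ptFlip_ptFlip]
    _ = threeSign m h s (ptFlip x) := hts (ptFlip x)
    _ = threeSign m h s (ptFlip y) := hall _ _
    _ = threeSign (switchM m) (switchH h) (switchS s) (ptFlip (ptFlip y)) :=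
        (hts (ptFlip y)).symm
    _ = threeSign (switchM m) (switchH h) (switchS s) y := by rw [ptFlip_ptFlip]
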